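/- Let (Ω,μ) be a probability space, 0 < q < p < ∞, 1/r = 1/q - 1/p, and 𝓕 a family of nonnegative measurable functions in L_{q,∞}. If there exist a constant C and a positive measurable g with ‖g‖_{r,∞} = 1 and sup_{f∈𝓕} ‖f/g‖_{p,∞} ≤ C, then for every 0 < δ < 1 there exists a measurable set E_δ with μ(E_δ) ≥ 1 - δ and sup_{f∈𝓕} ‖1_{E_δ} f‖_{p,∞} ≤ C' δ^{-1/r} for a constant C' depending only on C, p, q. -/

import Mathlib

/-!
On `E = {g ≤ δ^{-1/r}}` we have `f ≤ δ^{-1/r} · f / g`, so the weak-`L_p` bound on `f / g`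
transfers to `1_E f` at the cost of the factor `δ^{-1/r}`; the complement of `E` has measure at
most `δ` by Chebyshev's inequality for the weak-`L_r` norm of `g`.
-/

open MeasureTheory ENNReal Filter

/-- The weak-`L_s` quasi-norm `‖f‖_{s,∞} = sup_{t>0} t · μ({|f| > t})^{1/s}`. -/
noncomputable def weakNorm {Ω : Type*} [MeasurableSpace Ω] (μ : Measure Ω) (s : ℝ)
    (f : Ω → ℝ) : ℝ≥0∞ :=
  ⨆ (t : ℝ) (_ : 0 < t), ENNReal.ofReal t * μ {ω | t < |f ω|} ^ (1 / s)

section WeakNorm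

variable {Ω : Type*} [MeasurableSpace Ω] {μ : Measure Ω} {s : ℝ} {f h : Ω → ℝ}

lemma ofReal_mul_rpow_le_weakNorm {t : ℝ} (ht : 0 < t) :
    ENNReal.ofReal t * μ {ω | t < |f ω|} ^ (1 / s) ≤ weakNorm μ s f :=
  le_iSup₂ (f := fun t (_ : 0 < t) => ENNReal.ofReal t * μ {ω | t < |f ω|} ^ (1 / s)) t ht

lemma measure_lt_abs_le_of_weakNorm_le {M : ℝ≥0∞} (hs : 0 < s) (hf : weakNorm μ s f ≤ M)
    {t : ℝ} (ht : 0 < t) : μ {ω | t < |f ω|} ≤ (M / ENNReal.ofReal t) ^ s := by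
  have hbound := (ofReal_mul_rpow_le_weakNorm (μ := μ) (s := s) ht).trans hf
  rw [mul_comm, ← ENNReal.le_div_iff_mul_le (by simp [ht]) (by simp), one_div] at hbound
  exact (ENNReal.rpow_inv_le_iff hs).1 hbound

lemma weakNorm_mono (hs : 0 ≤ s) (hfh : ∀ ω, |f ω| ≤ |h ω|) : weakNorm μ s f ≤ weakNorm μ s h :=
  iSup₂_mono fun _ _ => mul_le_mul_right
    (ENNReal.rpow_le_rpow (measure_mono fun ω hω => hω.trans_le (hfh ω)) (one_div_nonneg.2 hs)) _

lemma weakNorm_const_mul_le {c : ℝ} (hc : 0 < c) :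
    weakNorm μ s (fun ω => c * f ω) ≤ ENNReal.ofReal c * weakNorm μ s f := by
  refine iSup₂_le fun t ht => ?_
  have hlevel : {ω | t < |c * f ω|} = {ω | t / c < |f ω|} := by
    ext ω
    simp only [Set.mem_ofPred_eq, abs_mul, abs_of_pos hc, div_lt_iff₀' hc]
  calc ENNReal.ofReal t * μ {ω | t < |c * f ω|} ^ (1 / s)
      = ENNReal.ofReal c * (ENNReal.ofReal (t / c) * μ {ω | t / c < |f ω|} ^ (1 / s)) := by
        rw [hlevel, ← mul_assoc, ← ENNReal.ofReal_mul hc.le, mul_div_cancel₀ t hc.ne']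
    _ ≤ ENNReal.ofReal c * weakNorm μ s f := by
        gcongr
        exact ofReal_mul_rpow_le_weakNorm (div_pos ht hc)

end WeakNorm

lemma abs_indicator_le_mul_abs_div {Ω : Type*} {f g : Ω → ℝ} (hg : ∀ ω, 0 < g ω) {T : ℝ}
    (hT : 0 ≤ T) (ω : Ω) : |{ω | g ω ≤ T}.indicator f ω| ≤ T * |f ω / g ω| := by
  by_cases hω : g ω ≤ T
  · rw [Set.indicator_of_mem (show ω ∈ {ω | g ω ≤ T} from hω), abs_div, abs_of_pos (hg ω),
      mul_div_assoc', le_div_iff₀ (hg ω), mul_comm T]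
    exact mul_le_mul_of_nonneg_left hω (abs_nonneg _)
  · rw [Set.indicator_of_notMem (show ω ∉ {ω | g ω ≤ T} from hω), abs_zero]
    positivity

/-- N1 ⇒ N3 of the extended Nikishin theorem: if `‖g‖_{r,∞} = 1` and
`sup_{f∈𝓕} ‖f/g‖_{p,∞} ≤ C`, then for every `0 < δ < 1` there is a set `E_δ` with
`μ(E_δ) ≥ 1 - δ` and `sup_{f∈𝓕} ‖1_{E_δ} f‖_{p,∞} ≤ C' δ^{-1/r}`, where `C'` depends
only on `C, p, q`. -/
theorem nikishin_N1_implies_N3 (q p r C : ℝ) (hq : 0 < q) (hqp : q < p)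
    (hr : 1 / r = 1 / q - 1 / p) (hC : 0 < C) :
    ∃ C' : ℝ, 0 < C' ∧
      ∀ (Ω : Type) (_ : MeasurableSpace Ω) (μ : Measure Ω), IsProbabilityMeasure μ →
      ∀ 𝓕 : Set (Ω → ℝ), (∀ f ∈ 𝓕, Measurable f ∧ (∀ ω, 0 ≤ f ω) ∧ weakNorm μ q f < ⊤) →
      ∀ g : Ω → ℝ, Measurable g → (∀ ω, 0 < g ω) → weakNorm μ r g = 1 →
        (∀ f ∈ 𝓕, weakNorm μ p (fun ω => f ω / g ω) ≤ ENNReal.ofReal C) →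
      ∀ δ : ℝ, 0 < δ → δ < 1 →
        ∃ E : Set Ω, MeasurableSet E ∧ 1 - ENNReal.ofReal δ ≤ μ E ∧
          ∀ f ∈ 𝓕, weakNorm μ p (E.indicator f) ≤ ENNReal.ofReal (C' * δ ^ (-(1 / r))) := by
  have hp : 0 < p := hq.trans hqp
  have hr_pos : 0 < r :=
    one_div_pos.1 (by rw [hr]; exact sub_pos.2 (one_div_lt_one_div_of_lt hq hqp))
  refine ⟨C, hC, fun Ω _ μ _ 𝓕 _ g hg_meas hg_pos hg_norm hfg δ hδ _ => ?_⟩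
  set T := δ ^ (-(1 / r))
  have hT : 0 < T := Real.rpow_pos_of_pos hδ _
  have htail : μ {ω | T < g ω} ≤ ENNReal.ofReal δ := by
    have hofReal : ENNReal.ofReal T = ENNReal.ofReal δ ^ (-(1 / r)) := by
      rw [← ENNReal.ofReal_rpow_of_pos hδ]
    have habs : {ω | T < |g ω|} = {ω | T < g ω} := by simp only [abs_of_pos (hg_pos _)]
    have h := measure_lt_abs_le_of_weakNorm_le (μ := μ) hr_pos hg_norm.le hT
    rwa [habs, hofReal, one_div, ← ENNReal.rpow_neg, neg_neg, ← ENNReal.rpow_mul,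
      one_div_mul_cancel hr_pos.ne', ENNReal.rpow_one] at h
  refine ⟨{ω | g ω ≤ T}, hg_meas measurableSet_Iic, ?_, fun f hf => ?_⟩
  · have hcompl : {ω | g ω ≤ T} = {ω | T < g ω}ᶜ := by ext; simp
    rw [hcompl, prob_compl_eq_one_sub (measurableSet_lt measurable_const hg_meas)]
    exact tsub_le_tsub_left htail 1
  · calc weakNorm μ p ({ω | g ω ≤ T}.indicator f)
        ≤ weakNorm μ p (fun ω => T * (f ω / g ω)) :=
          weakNorm_mono hp.le fun ω => by
            simpa only [abs_mul, abs_of_pos hT] using abs_indicator_le_mul_abs_div hg_pos hT.le ω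
      _ ≤ ENNReal.ofReal T * weakNorm μ p (fun ω => f ω / g ω) := weakNorm_const_mul_le hT
      _ ≤ ENNReal.ofReal T * ENNReal.ofReal C := by gcongr; exact hfg f hf
      _ = ENNReal.ofReal (C * T) := by rw [← ENNReal.ofReal_mul hT.le, mul_comm]
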